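/- Let M ≥ 2 and n₁,…,n_M ≥ 2 be integers, Q = ∏_{i=1}^M n_i − ∑_{i=1}^M n_i + M − 1, and let c_I = (M − 1 − ∑_{i∈I} n_i)/Q for proper subsets I ⊊ {1,…,M} with c_{{1,…,M}} = 1. Then ∑_{I⊆{1,…,M}} c_I ∏_{j∈Iᶜ} (n_j − 1) = 0. Equivalently, every row of the S×S matrix with entries c_{I(z,z′)} sums to zero (the all-ones vector lies in its kernel), i.e. λ_J = 0 for J = {1,…,M}. -/

import Mathlib

open Finset

/-!
The subset sum `∑_{I ⊆ s} (b - ∑_{i ∈ I} x_i) ∏_{j ∈ s \ I} (x_j - 1)` equals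
`(b - #s) ∏_{j ∈ s} x_j` (induction on `s`). With `b = M - 1` it shows that replacing `c_univ` by
the proper-subset formula would make the weighted sum `-∏ n_j / Q`; the true value `c_univ = 1`
adds `1 - (M - 1 - ∑ n_j) / Q`, and the two cancel precisely because of the definition of `Q`.
Since `∏_{j ∉ I} (n_j - 1)` strata have agreement set `I` with a given stratum, the weighted sum is
also every row sum of `c_{I(z,z')}`.
-/

theorem Finset.sum_le_prod_of_two_le {ι R : Type*} [CommSemiring R] [LinearOrder R]
    [IsStrictOrderedRing R] {f : ι → R} (s : Finset ι) (hf : ∀ i ∈ s, 2 ≤ f i) :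
    ∑ i ∈ s, f i ≤ ∏ i ∈ s, f i := by
  rcases s.eq_empty_or_nonempty with rfl | hs
  · simp
  induction hs using Finset.Nonempty.cons_induction with
  | singleton a => simp
  | cons a s ha hs ih =>
    rw [sum_cons, prod_cons]
    have hs_le := ih fun i hi => hf i (mem_cons_of_mem hi)
    have two_le_sum : 2 ≤ ∑ i ∈ s, f i := by
      obtain ⟨i, hi⟩ := hs
      exact (hf i (mem_cons_of_mem hi)).trans <| single_le_sum
        (fun j hj => zero_le_two.trans (hf j (mem_cons_of_mem hj))) hi
    calc f a + ∑ i ∈ s, f i ≤ f a + ∏ i ∈ s, f i := by gcongr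
      _ ≤ f a * ∏ i ∈ s, f i := add_le_mul (hf a (mem_cons_self a s)) (two_le_sum.trans hs_le)

theorem Finset.sum_powerset_sub_sum_mul_prod_sdiff {ι R : Type*} [CommRing R] [DecidableEq ι]
    (x : ι → R) (s : Finset ι) (b : R) :
    ∑ I ∈ s.powerset, (b - ∑ i ∈ I, x i) * ∏ j ∈ s \ I, (x j - 1) = (b - #s) * ∏ j ∈ s, x j := by
  induction s using Finset.induction_on generalizing b with
  | empty => simp
  | insert a s ha ih =>
    have not_mem_of_subset {I : Finset ι} (hI : I ∈ s.powerset) : a ∉ I :=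
      fun h => ha (mem_powerset.mp hI h)
    have without_a : ∑ I ∈ s.powerset, (b - ∑ i ∈ I, x i) * ∏ j ∈ insert a s \ I, (x j - 1)
        = (x a - 1) * ((b - #s) * ∏ j ∈ s, x j) := by
      rw [← ih, mul_sum]
      refine sum_congr rfl fun I hI => ?_
      rw [insert_sdiff_of_notMem _ (not_mem_of_subset hI),
        prod_insert fun h => ha (mem_sdiff.mp h).1]
      ring
    have with_a : ∑ I ∈ s.powerset,
        (b - ∑ i ∈ insert a I, x i) * ∏ j ∈ insert a s \ insert a I, (x j - 1)
        = (b - x a - #s) * ∏ j ∈ s, x j := by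
      rw [← ih]
      refine sum_congr rfl fun I hI => ?_
      rw [insert_sdiff_insert, sdiff_insert_of_notMem ha, sum_insert (not_mem_of_subset hI)]
      ring
    rw [sum_powerset_insert ha, without_a, with_a, prod_insert ha, card_insert_of_notMem ha]
    push_cast
    ring

theorem Fintype.card_filter_agreement_eq {ι : Type*} [Fintype ι] [DecidableEq ι]
    {β : ι → Type*} [∀ i, Fintype (β i)] [∀ i, DecidableEq (β i)] (z : ∀ i, β i) (I : Finset ι) :
    #{z' : ∀ i, β i | univ.filter (fun i => z i = z' i) = I} =
      ∏ i ∈ Iᶜ, (Fintype.card (β i) - 1) := by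
  have hpi : ({z' : ∀ i, β i | univ.filter (fun i => z i = z' i) = I} : Finset _)
      = piFinset fun i => if i ∈ I then {z i} else {z i}ᶜ := by
    ext z'
    simp only [mem_filter, mem_univ, true_and, Fintype.mem_piFinset, Finset.ext_iff]
    refine forall_congr' fun i => ?_
    by_cases hi : i ∈ I <;> simp [hi, eq_comm]
  rw [hpi, card_piFinset, ← Fintype.prod_ite_mem Iᶜ]
  refine Fintype.prod_congr _ _ fun i => ?_
  by_cases hi : i ∈ I <;> simp [hi, card_compl]

theorem sum_mul_prod_compl_sub_one_eq_zero {ι K : Type*} [Fintype ι] [DecidableEq ι] [Field K]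
    (x : ι → K) {Q : K} (hQ : Q = (∏ i, x i) - (∑ i, x i) + Fintype.card ι - 1) (hQ_ne : Q ≠ 0)
    (c : Finset ι → K) (hc : ∀ I, I ≠ univ → c I = (Fintype.card ι - 1 - ∑ i ∈ I, x i) / Q)
    (hc_univ : c univ = 1) :
    ∑ I, c I * ∏ j ∈ Iᶜ, (x j - 1) = 0 := by
  set g : Finset ι → K := fun I => (Fintype.card ι - 1 - ∑ i ∈ I, x i) / Q
  have sum_g : ∑ I, g I * ∏ j ∈ Iᶜ, (x j - 1) = -(∏ i, x i) / Q := by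
    have := sum_powerset_sub_sum_mul_prod_sdiff x univ ((Fintype.card ι : K) - 1)
    simp only [powerset_univ, ← compl_eq_univ_sdiff, card_univ] at this
    simp only [g, div_mul_eq_mul_div, ← sum_div, this]
    ring
  -- `c` and `g` differ only at `univ`, whose complement is empty.
  have sum_c_sub_g : ∑ I, (c I - g I) * ∏ j ∈ Iᶜ, (x j - 1) = 1 - g univ := by
    rw [sum_eq_single univ (fun I _ hI => by rw [hc I hI, sub_self, zero_mul]) (by simp)]
    simp [hc_univ]
  calc ∑ I, c I * ∏ j ∈ Iᶜ, (x j - 1) = -(∏ i, x i) / Q + (1 - g univ) := by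
        rw [← sum_g, ← sum_c_sub_g, ← sum_add_distrib]
        exact sum_congr rfl fun I _ => by ring
    _ = 0 := by
        simp only [g]
        field_simp
        rw [hQ]
        ring

/-- **First step of the proof of Lemma 1 of the paper (case `#Jᶜ = 0`).**
For the equal-prevalence correlation family,
`∑_{I⊆{1,…,M}} c_I ∏_{j∈Iᶜ} (n_j − 1) = 0`; equivalently, every row of the
matrix with entries `c_{I(z,z′)}` sums to zero (the all-ones vector lies in
its kernel), i.e. `λ_J = 0` for `J = {1,…,M}`. -/
theorem equal_prevalence_row_sum_zero
    (M : ℕ) (hM : 2 ≤ M) (n : Fin M → ℕ) (hn : ∀ j, 2 ≤ n j)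
    (Q : ℝ) (hQ : Q = (∏ i, (n i : ℝ)) - (∑ i, (n i : ℝ)) + M - 1)
    (c : Finset (Fin M) → ℝ)
    (hc : ∀ I : Finset (Fin M), I ≠ Finset.univ →
      c I = ((M : ℝ) - 1 - ∑ i ∈ I, (n i : ℝ)) / Q)
    (hcuniv : c Finset.univ = 1) :
    (∑ I : Finset (Fin M), c I * ∏ j ∈ Iᶜ, ((n j : ℝ) - 1)) = 0 ∧
    ∀ z : ∀ j, Fin (n j),
      (∑ z' : ∀ j, Fin (n j),
        c (Finset.univ.filter fun j => z j = z' j)) = 0 := by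
  have hQ_ne : Q ≠ 0 := by
    have sum_le_prod := sum_le_prod_of_two_le (f := fun i => (n i : ℝ)) univ
      fun i _ => by exact_mod_cast hn i
    have two_le_M : (2 : ℝ) ≤ M := by exact_mod_cast hM
    rw [hQ]
    linarith
  have row_sum := sum_mul_prod_compl_sub_one_eq_zero (fun i => (n i : ℝ))
    (by simpa using hQ) hQ_ne c (by simpa using hc) hcuniv
  refine ⟨row_sum, fun z => ?_⟩
  -- Group the strata `z'` by their agreement set with `z`.
  rw [← row_sum, ← sum_fiberwise' univ (fun z' : ∀ j, Fin (n j) => univ.filter fun j => z j = z' j)]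
  refine sum_congr rfl fun I _ => ?_
  rw [sum_const, Fintype.card_filter_agreement_eq, nsmul_eq_mul, mul_comm, Nat.cast_prod]
  congr 1
  refine prod_congr rfl fun j _ => ?_
  simp [Nat.cast_sub (one_le_two.trans (hn j))]
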